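/- Let (𝒫,ℐ) be a complete cotorsion pair in ℰ. Then the pair (𝒫_Sp, ℐ_Sp) in Span(ℰ) is complete: every object X of Span(ℰ) fits into a short exact sequence 0 → I → P → X → 0 in Span(ℰ) with I ∈ ℐ_Sp and P ∈ 𝒫_Sp, and into a short exact sequence 0 → X → I′ → P′ → 0 in Span(ℰ) with I′ ∈ ℐ_Sp and P′ ∈ 𝒫_Sp. -/

import Mathlib

open CategoryTheory CategoryTheory.Limits

universe v u

variable {𝒜 : Type u} [Category.{v} 𝒜] [Abelian 𝒜]

/-- `(f, g)` forms a short exact sequence `0 ⟶ X ⟶ Y ⟶ Z ⟶ 0` in the ambient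
abelian category `𝒜`. -/
def IsShortExactSeq {X Y Z : 𝒜} (f : X ⟶ Y) (g : Y ⟶ Z) : Prop :=
  ∃ w : f ≫ g = 0, (ShortComplex.mk f g w).ShortExact

/-- A class of objects is closed under isomorphisms. -/
def IsoClosed (P : 𝒜 → Prop) : Prop := ∀ ⦃X Y : 𝒜⦄, (X ≅ Y) → P X → P Y

/-- `Ext¹(X, Y) = 0` relative to the exact subcategory determined by `E`:
every short exact sequence `0 ⟶ Y ⟶ M ⟶ X ⟶ 0` in `E` splits. -/
def Ext1IsZero (E : 𝒜 → Prop) (X Y : 𝒜) : Prop :=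
  ∀ ⦃M : 𝒜⦄ (f : Y ⟶ M) (g : M ⟶ X), E M → IsShortExactSeq f g →
    ∃ r : M ⟶ Y, f ≫ r = 𝟙 Y

/-- `(C, I)` is a cotorsion pair in the exact subcategory of `𝒜` determined by
the class of objects `E`: the two classes are each other's orthogonal
complement with respect to `Ext¹`. -/
structure IsCotorsionPair (E C I : 𝒜 → Prop) : Prop where
  right_eq : ∀ Y, I Y ↔ (E Y ∧ ∀ ⦃X⦄, C X → Ext1IsZero E X Y)
  left_eq : ∀ X, C X ↔ (E X ∧ ∀ ⦃Y⦄, I Y → Ext1IsZero E X Y)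

/-- The cotorsion pair `(C, I)` in `E` is complete: every object of `E` admits
both kinds of approximation sequences. -/
def IsCompleteCP (E C I : 𝒜 → Prop) : Prop :=
  (∀ A, E A → ∃ (Y P : 𝒜) (f : A ⟶ Y) (g : Y ⟶ P),
      I Y ∧ C P ∧ IsShortExactSeq f g) ∧
  (∀ A, E A → ∃ (Y P : 𝒜) (f : Y ⟶ P) (g : P ⟶ A),
      I Y ∧ C P ∧ IsShortExactSeq f g)

/-- The cotorsion pair is hereditary: `C` is closed under kernels of
admissible epimorphisms in `E`. -/
def IsHereditaryCP (E C : 𝒜 → Prop) : Prop :=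
  ∀ ⦃X Y Z : 𝒜⦄ (f : X ⟶ Y) (g : Y ⟶ Z),
    IsShortExactSeq f g → E X → C Y → C Z → C X

/-- A cofibration: an admissible monomorphism between objects of `C` whose
cokernel lies in `C`. -/
def IsCofib (C : 𝒜 → Prop) {X Y : 𝒜} (f : X ⟶ Y) : Prop :=
  C X ∧ C Y ∧ ∃ (W : 𝒜) (g : Y ⟶ W), C W ∧ IsShortExactSeq f g

/-- An acyclic fibration: an admissible epimorphism in `E` whose kernel lies
in `I`. -/
def IsAcyclicFib (E I : 𝒜 → Prop) {Y Z : 𝒜} (g : Y ⟶ Z) : Prop :=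
  E Y ∧ E Z ∧ ∃ (K : 𝒜) (k : K ⟶ Y), I K ∧ IsShortExactSeq k g

/-- An acyclic cofibration: an admissible monomorphism between objects of `C`
whose cokernel lies in `C ∩ Z`. -/
def IsAcyclicCofib (C Zc : 𝒜 → Prop) {X Y : 𝒜} (f : X ⟶ Y) : Prop :=
  C X ∧ C Y ∧ ∃ (W : 𝒜) (g : Y ⟶ W), C W ∧ Zc W ∧ IsShortExactSeq f g

/-- A weak equivalence: a morphism between objects of `C` that factors as an
acyclic cofibration followed by an acyclic fibration. -/
def IsWeakEquiv (E C I Zc : 𝒜 → Prop) {X Y : 𝒜} (f : X ⟶ Y) : Prop :=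
  C X ∧ C Y ∧ ∃ (M : 𝒜) (i : X ⟶ M) (p : M ⟶ Y),
    IsAcyclicCofib C Zc i ∧ IsAcyclicFib E I p ∧ i ≫ p = f

/-- The standing setup: a complete hereditary cotorsion pair `(Cc, Ip)` in the
exact subcategory of `𝒜` determined by the isomorphism-closed,
extension-closed class `E`, together with an isomorphism-closed class
`Zc ⊆ E` with `Ip ⊆ Zc`, such that `Zc ∩ Cc` is closed under extensions and
under cokernels of admissible monomorphisms in `Cc`. -/
structure CotorsionSetup (E Cc Ip Zc : 𝒜 → Prop) : Prop where
  isoE : IsoClosed E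
  isoC : IsoClosed Cc
  isoI : IsoClosed Ip
  isoZ : IsoClosed Zc
  extClosedE : ∀ ⦃X Y Z : 𝒜⦄ (f : X ⟶ Y) (g : Y ⟶ Z),
    IsShortExactSeq f g → E X → E Z → E Y
  cp : IsCotorsionPair E Cc Ip
  complete : IsCompleteCP E Cc Ip
  hereditary : IsHereditaryCP E Cc
  zSubE : ∀ ⦃X⦄, Zc X → E X
  iSubZ : ∀ ⦃X⦄, Ip X → Zc X
  zcExtClosed : ∀ ⦃X Y Z : 𝒜⦄ (f : X ⟶ Y) (g : Y ⟶ Z), IsShortExactSeq f g →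
    Cc X → Cc Y → Cc Z → Zc X → Zc Z → Zc Y
  zcCokerClosed : ∀ ⦃X Y Z : 𝒜⦄ (f : X ⟶ Y) (g : Y ⟶ Z), IsShortExactSeq f g →
    Cc X → Cc Y → Cc Z → Zc X → Zc Y → Zc Z

/-- A span (an object of `WalkingSpan ⥤ 𝒜`) lies in `Span(E)`: all three of
its objects lie in `E`. -/
def InSpan (E : 𝒜 → Prop) (X : WalkingSpan ⥤ 𝒜) : Prop :=
  ∀ j, E (X.obj j)

/-- The class `𝒫_Sp` of spans `C ← A →ⁱ B` with `A, B, C ∈ P` and `i` an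
admissible monomorphism with cokernel in `P`. -/
def PSp (P : 𝒜 → Prop) (X : WalkingSpan ⥤ 𝒜) : Prop :=
  P (X.obj WalkingSpan.zero) ∧ P (X.obj WalkingSpan.left) ∧
  P (X.obj WalkingSpan.right) ∧
  ∃ (W : 𝒜) (q : X.obj WalkingSpan.right ⟶ W), P W ∧
    IsShortExactSeq (X.map WalkingSpan.Hom.snd) q

/-- The class `ℐ_Sp` of spans `C ←ᵖ A → B` with `A, B, C ∈ I` and `p` an
admissible epimorphism with kernel in `I`. -/
def ISp (I : 𝒜 → Prop) (X : WalkingSpan ⥤ 𝒜) : Prop :=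
  I (X.obj WalkingSpan.zero) ∧ I (X.obj WalkingSpan.left) ∧
  I (X.obj WalkingSpan.right) ∧
  ∃ (K : 𝒜) (k : K ⟶ X.obj WalkingSpan.zero), I K ∧
    IsShortExactSeq k (X.map WalkingSpan.Hom.fst)


/-!
Both approximations are built vertex by vertex. For the precover of `C ← A → B`, take a special
precover `P_C → C`, pull it back along `A → C` and take a special precover `Q_A` of the
pullback: the kernel of `Q_A → A` is an extension of two objects of `I`, and the induced map of
kernels is a deflation with kernel in `I`. At `B`, factor `Q_A → B` as an inflation with
cokernel in `P` followed by a deflation with kernel in `I`, through `P_B ⊞ I₀` for a special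
precover `P_B → B` and a special preenvelope `Q_A → I₀`, which lies in `P ∩ I`. The preenvelope
is dual: factor `A → C → I_C` through an inflation with cokernel in `P` into an object of `I`,
push it out along `A → B` and take a special preenvelope of the pushout. `P` and `I` are closed
under extensions because `Ext¹(X, -) = 0` and `Ext¹(-, Y) = 0` are.
-/

def IsInflationWithCokernelIn (P : 𝒜 → Prop) {X Y : 𝒜} (i : X ⟶ Y) : Prop :=
  ∃ (W : 𝒜) (c : Y ⟶ W), P W ∧ IsShortExactSeq i c

def IsDeflationWithKernelIn (I : 𝒜 → Prop) {Y Z : 𝒜} (p : Y ⟶ Z) : Prop :=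
  ∃ (K : 𝒜) (k : K ⟶ Y), I K ∧ IsShortExactSeq k p

def IsExtensionClosed (E : 𝒜 → Prop) : Prop :=
  ∀ ⦃X Y Z : 𝒜⦄ (f : X ⟶ Y) (g : Y ⟶ Z), IsShortExactSeq f g → E X → E Z → E Y

namespace IsShortExactSeq

variable {X Y Z : 𝒜} {f : X ⟶ Y} {g : Y ⟶ Z}

lemma w (h : IsShortExactSeq f g) : f ≫ g = 0 := h.1

lemma mono (h : IsShortExactSeq f g) : Mono f := h.2.mono_f

lemma epi (h : IsShortExactSeq f g) : Epi g := h.2.epi_g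

lemma exists_lift (h : IsShortExactSeq f g) {W : 𝒜} (t : W ⟶ Y) (ht : t ≫ g = 0) :
    ∃ l : W ⟶ X, l ≫ f = t :=
  ⟨_, (KernelFork.IsLimit.lift' h.2.fIsKernel t ht).2⟩

lemma exists_desc (h : IsShortExactSeq f g) {W : 𝒜} (t : Y ⟶ W) (ht : f ≫ t = 0) :
    ∃ l : Z ⟶ W, g ≫ l = t :=
  ⟨_, (CokernelCofork.IsColimit.desc' h.2.gIsCokernel t ht).2⟩

lemma of_isLimit (w : f ≫ g = 0) [Epi g] (hf : IsLimit (KernelFork.ofι f w)) :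
    IsShortExactSeq f g :=
  ⟨w, .mk' (ShortComplex.exact_of_f_is_kernel _ hf) (mono_of_isLimit_fork hf) ‹_›⟩

lemma of_isColimit (w : f ≫ g = 0) [Mono f] (hg : IsColimit (CokernelCofork.ofπ g w)) :
    IsShortExactSeq f g :=
  ⟨w, .mk' (ShortComplex.exact_of_g_is_cokernel _ hg) ‹_› (epi_of_isColimit_cofork hg)⟩

lemma of_lift (w : f ≫ g = 0) [Mono f] [Epi g]
    (lift : ∀ {W : 𝒜} (t : W ⟶ Y), t ≫ g = 0 → ∃ l : W ⟶ X, l ≫ f = t) :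
    IsShortExactSeq f g :=
  of_isLimit w (KernelFork.IsLimit.ofι' f w fun t ht => ⟨_, (lift t ht).choose_spec⟩)

lemma of_desc (w : f ≫ g = 0) [Mono f] [Epi g]
    (desc : ∀ {W : 𝒜} (t : Y ⟶ W), f ≫ t = 0 → ∃ l : Z ⟶ W, g ≫ l = t) :
    IsShortExactSeq f g :=
  of_isColimit w (CokernelCofork.IsColimit.ofπ' g w fun t ht => ⟨_, (desc t ht).choose_spec⟩)

lemma exists_section_of_retraction (h : IsShortExactSeq f g) {r : Y ⟶ X} (hr : f ≫ r = 𝟙 X) :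
    ∃ s : Z ⟶ Y, s ≫ g = 𝟙 Z :=
  have := h.epi
  ⟨_, (ShortComplex.Splitting.ofExactOfRetraction _ h.2.exact r hr ‹_›).s_g⟩

lemma exists_retraction_of_section (h : IsShortExactSeq f g) {s : Z ⟶ Y} (hs : s ≫ g = 𝟙 Z) :
    ∃ r : Y ⟶ X, f ≫ r = 𝟙 X :=
  have := h.mono
  ⟨_, (ShortComplex.Splitting.ofExactOfSection _ h.2.exact s hs ‹_›).f_r⟩

lemma biprod (X Z : 𝒜) :
    IsShortExactSeq (biprod.inl : X ⟶ X ⊞ Z) (biprod.snd : X ⊞ Z ⟶ Z) :=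
  ⟨_, (ShortComplex.Splitting.ofHasBinaryBiproduct X Z).shortExact⟩

section

variable {K M T A W : 𝒜}

lemma pullback_snd {k : K ⟶ M} {g : M ⟶ T} (h : IsShortExactSeq k g) {Z : 𝒜} (u : Z ⟶ T) :
    IsShortExactSeq (pullback.lift k 0 (by simp [h.w]) : K ⟶ Limits.pullback g u)
      (pullback.snd g u) := by
  have := h.epi
  have : Mono (pullback.lift k 0 (by simp [h.w]) : K ⟶ Limits.pullback g u) :=
    have := h.mono
    mono_of_mono_fac (pullback.lift_fst _ _ _)
  refine of_lift (pullback.lift_snd _ _ _) fun t ht => ?_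
  obtain ⟨l, hl⟩ :=
    h.exists_lift (t ≫ pullback.fst g u) (by simp [pullback.condition, reassoc_of% ht])
  exact ⟨l, pullback.hom_ext (by simpa [pullback.lift_fst] using hl)
    (by simpa [pullback.lift_snd] using ht.symm)⟩

lemma pushout_inl {m : A ⟶ M} {c : M ⟶ W} (h : IsShortExactSeq m c) {Y : 𝒜} (u : A ⟶ Y) :
    IsShortExactSeq (pushout.inl u m)
      (pushout.desc 0 c (by simp [h.w]) : Limits.pushout u m ⟶ W) := by
  have := h.mono
  have : Epi (pushout.desc 0 c (by simp [h.w]) : Limits.pushout u m ⟶ W) :=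
    have := h.epi
    epi_of_epi_fac (pushout.inr_desc _ _ _)
  refine of_desc (pushout.inl_desc _ _ _) fun t ht => ?_
  obtain ⟨l, hl⟩ := h.exists_desc (pushout.inr u m ≫ t) (by simp [← pushout.condition_assoc, ht])
  exact ⟨l, pushout.hom_ext (by simpa [pushout.inl_desc_assoc] using ht.symm)
    (by simpa [pushout.inr_desc_assoc] using hl)⟩

lemma comp_mono {a : A ⟶ M} {c : M ⟶ W} (h : IsShortExactSeq a c) {N : 𝒜} (i : M ⟶ N)
    [Mono i] : IsShortExactSeq (a ≫ i) (pushout.inr c i) := by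
  have := h.mono
  have := h.epi
  refine of_desc (by simp [← pushout.condition, reassoc_of% h.w]) fun t ht => ?_
  obtain ⟨l, hl⟩ := h.exists_desc (i ≫ t) (by simpa using ht)
  exact ⟨pushout.desc l t hl, pushout.inr_desc _ _ _⟩

lemma epi_comp {k : K ⟶ M} {g : M ⟶ T} (h : IsShortExactSeq k g) {N : 𝒜} (p : N ⟶ M)
    [Epi p] : IsShortExactSeq (pullback.fst p k) (p ≫ g) := by
  have := h.mono
  have := h.epi
  refine of_lift (by rw [pullback.condition_assoc, h.w, comp_zero]) fun t ht => ?_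
  obtain ⟨l, hl⟩ := h.exists_lift (t ≫ p) (by simpa using ht)
  exact ⟨pullback.lift t l hl.symm, pullback.lift_fst _ _ _⟩

end

end IsShortExactSeq

section Biproduct

variable {X Y Z : 𝒜}

lemma isShortExactSeq_biprod_lift_neg (v : X ⟶ Z) (e : X ⟶ Y) [Mono e] :
    IsShortExactSeq (biprod.lift v (-e)) (biprod.desc (pushout.inl v e) (pushout.inr v e)) :=
  have : Mono (biprod.lift v (-e)) := mono_of_mono_fac (show _ ≫ (-biprod.snd) = e by simp)
  .of_isColimit _ (Abelian.BiproductToPushoutIsCokernel.isColimitBiproductToPushout v e)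

lemma isShortExactSeq_biprod_desc_neg (p : X ⟶ Z) (w : Y ⟶ Z) [Epi p] :
    IsShortExactSeq (biprod.lift (pullback.fst p w) (pullback.snd p w)) (biprod.desc p (-w)) :=
  have : Epi (biprod.desc p (-w)) := epi_of_epi_fac (show biprod.inl ≫ _ = p by simp)
  .of_isLimit _ (Abelian.PullbackToBiproductIsKernel.isLimitPullbackToBiproduct p w)

end Biproduct

section Ext1

variable {E : 𝒜 → Prop}

lemma IsExtensionClosed.biprod_mem (hE : IsExtensionClosed E) {X Y : 𝒜} (hX : E X) (hY : E Y) :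
    E (X ⊞ Y) :=
  hE _ _ (IsShortExactSeq.biprod X Y) hX hY

namespace Ext1IsZero

lemma exists_lift (hE : IsExtensionClosed E) {X K M T : 𝒜} (hext : Ext1IsZero E X K) (hX : E X)
    (hK : E K) {k : K ⟶ M} {g : M ⟶ T} (h : IsShortExactSeq k g) (u : X ⟶ T) :
    ∃ v : X ⟶ M, v ≫ g = u := by
  have hu := h.pullback_snd u
  obtain ⟨r, hr⟩ := hext _ _ (hE _ _ hu hK hX) hu
  obtain ⟨s, hs⟩ := hu.exists_section_of_retraction hr
  exact ⟨s ≫ pullback.fst g u, by rw [Category.assoc, pullback.condition, reassoc_of% hs]⟩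

lemma exists_extend (hE : IsExtensionClosed E) {W Y A M : 𝒜} (hext : Ext1IsZero E W Y) (hW : E W)
    (hY : E Y) {m : A ⟶ M} {c : M ⟶ W} (h : IsShortExactSeq m c) (u : A ⟶ Y) :
    ∃ v : M ⟶ Y, m ≫ v = u := by
  have hu := h.pushout_inl u
  obtain ⟨r, hr⟩ := hext _ _ (hE _ _ hu hY hW) hu
  exact ⟨pushout.inr u m ≫ r, by rw [← pushout.condition_assoc, hr, Category.comp_id]⟩

lemma extension_right (hE : IsExtensionClosed E) {X Y₁ K Y₂ : 𝒜} (h₁ : Ext1IsZero E X Y₁)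
    (h₂ : Ext1IsZero E X Y₂) (hX : E X) (hY₁ : E Y₁) (hY₂ : E Y₂) {a : Y₁ ⟶ K} {b : K ⟶ Y₂}
    (h : IsShortExactSeq a b) : Ext1IsZero E X K := by
  intro M ι g _ hιg
  have := hιg.mono
  -- `g` is the composite of the deflations `M ⟶ M/Y₁` (kernel `Y₁`) and `M/Y₁ ⟶ X` (kernel `Y₂`)
  obtain ⟨s₂, hs₂⟩ := h₂.exists_lift hE hX hY₂ (hιg.pushout_inl b) (𝟙 X)
  obtain ⟨s₁, hs₁⟩ := h₁.exists_lift hE hX hY₁ (h.comp_mono ι) s₂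
  exact hιg.exists_retraction_of_section (s := s₁)
    (by simpa [← hs₁, pushout.inr_desc] using hs₂)

lemma extension_left (hE : IsExtensionClosed E) {X₁ W X₂ Y : 𝒜} (h₁ : Ext1IsZero E X₁ Y)
    (h₂ : Ext1IsZero E X₂ Y) (hX₁ : E X₁) (hX₂ : E X₂) (hY : E Y) {a : X₁ ⟶ W} {b : W ⟶ X₂}
    (h : IsShortExactSeq a b) : Ext1IsZero E W Y := by
  intro N ι g _ hιg
  have := hιg.epi
  obtain ⟨r₁, hr₁⟩ := h₁.exists_extend hE hX₁ hY (hιg.pullback_snd a) (𝟙 Y)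
  obtain ⟨r, hr⟩ := h₂.exists_extend hE hX₂ hY (h.epi_comp g) r₁
  exact ⟨r, by rw [← hr₁, ← hr, pullback.lift_fst_assoc]⟩

end Ext1IsZero

end Ext1

namespace IsCotorsionPair

variable {E P I : 𝒜 → Prop}

lemma left_mem (hCP : IsCotorsionPair E P I) {X : 𝒜} (hX : P X) : E X :=
  ((hCP.left_eq X).1 hX).1

lemma right_mem (hCP : IsCotorsionPair E P I) {Y : 𝒜} (hY : I Y) : E Y :=
  ((hCP.right_eq Y).1 hY).1

lemma ext1IsZero (hCP : IsCotorsionPair E P I) {X Y : 𝒜} (hX : P X) (hY : I Y) :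
    Ext1IsZero E X Y :=
  ((hCP.right_eq Y).1 hY).2 hX

lemma exists_lift (hCP : IsCotorsionPair E P I) (hE : IsExtensionClosed E) {X K M T : 𝒜}
    (hX : P X) (hK : I K) {k : K ⟶ M} {g : M ⟶ T} (h : IsShortExactSeq k g) (u : X ⟶ T) :
    ∃ v : X ⟶ M, v ≫ g = u :=
  (hCP.ext1IsZero hX hK).exists_lift hE (hCP.left_mem hX) (hCP.right_mem hK) h u

lemma exists_extend (hCP : IsCotorsionPair E P I) (hE : IsExtensionClosed E) {W Y A M : 𝒜}
    (hW : P W) (hY : I Y) {m : A ⟶ M} {c : M ⟶ W} (h : IsShortExactSeq m c) (u : A ⟶ Y) :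
    ∃ v : M ⟶ Y, m ≫ v = u :=
  (hCP.ext1IsZero hW hY).exists_extend hE (hCP.left_mem hW) (hCP.right_mem hY) h u

lemma isExtensionClosed_right (hCP : IsCotorsionPair E P I) (hE : IsExtensionClosed E) :
    IsExtensionClosed I := fun _ _ _ a b h h₁ h₂ =>
  (hCP.right_eq _).2 ⟨hE a b h (hCP.right_mem h₁) (hCP.right_mem h₂), fun _ hX =>
    (hCP.ext1IsZero hX h₁).extension_right hE (hCP.ext1IsZero hX h₂) (hCP.left_mem hX)
      (hCP.right_mem h₁) (hCP.right_mem h₂) h⟩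

lemma isExtensionClosed_left (hCP : IsCotorsionPair E P I) (hE : IsExtensionClosed E) :
    IsExtensionClosed P := fun _ _ _ a b h h₁ h₂ =>
  (hCP.left_eq _).2 ⟨hE a b h (hCP.left_mem h₁) (hCP.left_mem h₂), fun _ hY =>
    (hCP.ext1IsZero h₁ hY).extension_left hE (hCP.ext1IsZero h₂ hY) (hCP.left_mem h₁)
      (hCP.left_mem h₂) (hCP.right_mem hY) h⟩

lemma exists_factorization_of_left (hCP : IsCotorsionPair E P I) (hcomplete : IsCompleteCP E P I)
    (hE : IsExtensionClosed E) {X B : 𝒜} (hX : P X) (hB : E B) (u : X ⟶ B) :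
    ∃ (M : 𝒜) (i : X ⟶ M) (p : M ⟶ B), P M ∧ IsInflationWithCokernelIn P i ∧
      IsDeflationWithKernelIn I p ∧ i ≫ p = u := by
  obtain ⟨Y, W, e, π, hY, hW, heπ⟩ := hcomplete.1 X (hCP.left_mem hX)
  obtain ⟨K, Q, k, q, hK, hQ, hkq⟩ := hcomplete.2 B hB
  obtain ⟨v, hv⟩ := hCP.exists_lift hE hX hK hkq u
  have hP := hCP.isExtensionClosed_left hE
  have hYP : P Y := hP _ _ heπ hX hW
  have := heπ.mono
  have := hkq.epi
  refine ⟨Q ⊞ Y, biprod.lift v (-e), biprod.desc q (-0), hP.biprod_mem hQ hYP,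
    ⟨_, _, hP _ _ (heπ.pushout_inl v) hQ hW, isShortExactSeq_biprod_lift_neg v e⟩,
    ⟨_, _, hCP.isExtensionClosed_right hE _ _ (hkq.pullback_snd 0) hK hY,
      isShortExactSeq_biprod_desc_neg q 0⟩, by simp [hv]⟩

lemma exists_factorization_of_right (hCP : IsCotorsionPair E P I) (hcomplete : IsCompleteCP E P I)
    (hE : IsExtensionClosed E) {A Y : 𝒜} (hA : E A) (hY : I Y) (u : A ⟶ Y) :
    ∃ (M : 𝒜) (m : A ⟶ M) (r : M ⟶ Y), I M ∧ IsInflationWithCokernelIn P m ∧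
      IsDeflationWithKernelIn I r ∧ m ≫ r = u := by
  obtain ⟨J, W, e, π, hJ, hW, heπ⟩ := hcomplete.1 A hA
  obtain ⟨K, Q, k, q, hK, hQ, hkq⟩ := hcomplete.2 Y (hCP.right_mem hY)
  obtain ⟨w, hw⟩ := hCP.exists_extend hE hW hY heπ u
  have hI := hCP.isExtensionClosed_right hE
  have hQI : I Q := hI _ _ hkq hK hY
  have := heπ.mono
  have := hkq.epi
  refine ⟨Q ⊞ J, biprod.lift 0 (-e), biprod.desc q (-w), hI.biprod_mem hQI hJ,
    ⟨_, _, hCP.isExtensionClosed_left hE _ _ (heπ.pushout_inl 0) hQ hW,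
      isShortExactSeq_biprod_lift_neg 0 e⟩,
    ⟨_, _, hI _ _ (hkq.pullback_snd w) hK hJ, isShortExactSeq_biprod_desc_neg q w⟩,
    by simp [hw]⟩

lemma exists_precover_over_deflation (hCP : IsCotorsionPair E P I)
    (hcomplete : IsCompleteCP E P I) (hE : IsExtensionClosed E) {K M C A : 𝒜} {k : K ⟶ M}
    {p : M ⟶ C} (hK : I K) (hkp : IsShortExactSeq k p) (hA : E A) (f : A ⟶ C) :
    ∃ (Q J : 𝒜) (j : J ⟶ Q) (q : Q ⟶ A) (s : Q ⟶ M) (t : J ⟶ K),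
      P Q ∧ I J ∧ IsShortExactSeq j q ∧ s ≫ p = q ≫ f ∧ j ≫ s = t ≫ k ∧
        IsDeflationWithKernelIn I t := by
  have hD := hkp.pullback_snd f
  obtain ⟨L, Q, l, d, hL, hQ, hld⟩ := hcomplete.2 _ (hE _ _ hD (hCP.right_mem hK) hA)
  have := hld.epi
  have hJ := hld.pullback_snd (pullback.lift k 0 (by simp [hkp.w]))
  refine ⟨Q, _, pullback.fst _ _, d ≫ pullback.snd p f, d ≫ pullback.fst p f, pullback.snd _ _,
    hQ, hCP.isExtensionClosed_right hE _ _ hJ hL hK, hD.epi_comp d, ?_, ?_, ⟨L, _, hL, hJ⟩⟩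
  · simp [pullback.condition]
  · rw [pullback.condition_assoc, pullback.lift_fst]

lemma exists_preenvelope_under_inflation (hCP : IsCotorsionPair E P I)
    (hcomplete : IsCompleteCP E P I) (hE : IsExtensionClosed E) {A M W B : 𝒜} {m : A ⟶ M}
    {c : M ⟶ W} (hW : P W) (hmc : IsShortExactSeq m c) (hB : E B) (g : A ⟶ B) :
    ∃ (Y V : 𝒜) (n : B ⟶ Y) (c' : Y ⟶ V) (j : M ⟶ Y) (w : W ⟶ V),
      I Y ∧ P V ∧ IsShortExactSeq n c' ∧ m ≫ j = g ≫ n ∧ c ≫ w = j ≫ c' ∧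
        IsInflationWithCokernelIn P w := by
  have hG := hmc.pushout_inl g
  obtain ⟨Y, L, e, π, hY, hL, heπ⟩ := hcomplete.1 _ (hE _ _ hG hB (hCP.left_mem hW))
  have := heπ.mono
  have hV := heπ.pushout_inl (pushout.desc 0 c (by simp [hmc.w]))
  refine ⟨Y, _, pushout.inl g m ≫ e, pushout.inr _ _, pushout.inr g m ≫ e, pushout.inl _ _,
    hY, hCP.isExtensionClosed_left hE _ _ hV hW hL, hG.comp_mono e, ?_, ?_, ⟨L, _, hL, hV⟩⟩
  · rw [pushout.condition_assoc]
  · rw [Category.assoc, ← pushout.condition, pushout.inr_desc_assoc]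

end IsCotorsionPair

lemma isShortExactSeq_of_forall_app {J : Type*} [Category J] {F G H : J ⥤ 𝒜} (α : F ⟶ G)
    (β : G ⟶ H) (h : ∀ j, IsShortExactSeq (α.app j) (β.app j)) : IsShortExactSeq α β := by
  have : ∀ j, Epi (β.app j) := fun j => (h j).epi
  have : Epi β := NatTrans.epi_of_epi_app β
  exact .of_isLimit (by ext j; exact (h j).w) (evaluationJointlyReflectsLimits _ fun j =>
    (isLimitMapConeForkEquiv' ((evaluation J 𝒜).obj j) _).symm (h j).2.fIsKernel)

section Span

variable {E P I : 𝒜 → Prop}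

lemma exists_precover_span (hCP : IsCotorsionPair E P I) (hcomplete : IsCompleteCP E P I)
    (hE : IsExtensionClosed E) {X : WalkingSpan ⥤ 𝒜} (hX : InSpan E X) :
    ∃ (J Q : WalkingSpan ⥤ 𝒜) (f : J ⟶ Q) (g : Q ⟶ X),
      ISp I J ∧ PSp P Q ∧ IsShortExactSeq f g := by
  obtain ⟨KC, QC, kC, pC, hKC, hQC, hC⟩ := hcomplete.2 _ (hX WalkingSpan.left)
  obtain ⟨QA, JA, jA, pA, s, t, hQA, hJA, hA, hs, hjs, ht⟩ :=
    hCP.exists_precover_over_deflation hcomplete hE hKC hC (hX WalkingSpan.zero)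
      (X.map WalkingSpan.Hom.fst)
  obtain ⟨QB, i, pB, hQB, hi, ⟨KB, kB, hKB, hB⟩, hipB⟩ :=
    hCP.exists_factorization_of_left hcomplete hE hQA (hX WalkingSpan.right)
      (pA ≫ X.map WalkingSpan.Hom.snd)
  obtain ⟨tB, htB⟩ := hB.exists_lift (jA ≫ i)
    (by rw [Category.assoc, hipB, ← Category.assoc, hA.w, zero_comp])
  refine ⟨span t tB, span s i, spanHomMk jA kC kB hjs.symm htB, spanHomMk pA pC pB hs hipB,
    ⟨hJA, hKC, hKB, ht⟩, ⟨hQA, hQC, hQB, hi⟩, isShortExactSeq_of_forall_app _ _ ?_⟩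
  rintro (_ | _ | _)
  exacts [hA, hC, hB]

lemma exists_preenvelope_span (hCP : IsCotorsionPair E P I) (hcomplete : IsCompleteCP E P I)
    (hE : IsExtensionClosed E) {X : WalkingSpan ⥤ 𝒜} (hX : InSpan E X) :
    ∃ (J Q : WalkingSpan ⥤ 𝒜) (f : X ⟶ J) (g : J ⟶ Q),
      ISp I J ∧ PSp P Q ∧ IsShortExactSeq f g := by
  obtain ⟨JC, QC, eC, πC, hJC, hQC, hC⟩ := hcomplete.1 _ (hX WalkingSpan.left)
  obtain ⟨JA, eA, r, hJA, ⟨QA, πA, hQA, hA⟩, hr, heAr⟩ :=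
    hCP.exists_factorization_of_right hcomplete hE (hX WalkingSpan.zero) hJC
      (X.map WalkingSpan.Hom.fst ≫ eC)
  obtain ⟨JB, QB, eB, πB, j, w, hJB, hQB, hB, hj, hw, hwi⟩ :=
    hCP.exists_preenvelope_under_inflation hcomplete hE hQA hA (hX WalkingSpan.right)
      (X.map WalkingSpan.Hom.snd)
  obtain ⟨d, hd⟩ := hA.exists_desc (r ≫ πC)
    (by rw [← Category.assoc, heAr, Category.assoc, hC.w, comp_zero])
  refine ⟨span r j, span d w, spanHomMk eA eC eB heAr.symm hj.symm,
    spanHomMk πA πC πB hd.symm hw.symm, ⟨hJA, hJC, hJB, hr⟩, ⟨hQA, hQC, hQB, hwi⟩,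
    isShortExactSeq_of_forall_app _ _ ?_⟩
  rintro (_ | _ | _)
  exacts [hA, hC, hB]

end Span

theorem span_cotorsion_pair_complete_general
    (E P I : 𝒜 → Prop) (hCP : IsCotorsionPair E P I)
    (hcomplete : IsCompleteCP E P I)
    (hEext : ∀ ⦃X Y Z : 𝒜⦄ (f : X ⟶ Y) (g : Y ⟶ Z),
      IsShortExactSeq f g → E X → E Z → E Y) :
    ∀ X : WalkingSpan ⥤ 𝒜, InSpan E X →
      (∃ (J Q : WalkingSpan ⥤ 𝒜) (f : J ⟶ Q) (g : Q ⟶ X),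
        ISp I J ∧ PSp P Q ∧ IsShortExactSeq f g) ∧
      (∃ (J' Q' : WalkingSpan ⥤ 𝒜) (f : X ⟶ J') (g : J' ⟶ Q'),
        ISp I J' ∧ PSp P Q' ∧ IsShortExactSeq f g) := fun _ hX =>
  ⟨exists_precover_span hCP hcomplete hEext hX, exists_preenvelope_span hCP hcomplete hEext hX⟩

/-- Let `(P, I)` be a complete cotorsion pair in `E`.  Then
the pair `(𝒫_Sp, ℐ_Sp)` in `Span(E)` is complete: every object `X` of
`Span(E)` fits into a short exact sequence `0 → J → Q → X → 0` in `Span(E)`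
with `J ∈ ℐ_Sp` and `Q ∈ 𝒫_Sp`, and into a short exact sequence
`0 → X → J' → Q' → 0` in `Span(E)` with `J' ∈ ℐ_Sp` and `Q' ∈ 𝒫_Sp`. -/
theorem span_cotorsion_pair_complete
    (E P I : 𝒜 → Prop) (hCP : IsCotorsionPair E P I)
    (hcomplete : IsCompleteCP E P I)
    (hEiso : IsoClosed E) (hPiso : IsoClosed P) (hIiso : IsoClosed I)
    (hEext : ∀ ⦃X Y Z : 𝒜⦄ (f : X ⟶ Y) (g : Y ⟶ Z),
      IsShortExactSeq f g → E X → E Z → E Y) :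
    ∀ X : WalkingSpan ⥤ 𝒜, InSpan E X →
      (∃ (J Q : WalkingSpan ⥤ 𝒜) (f : J ⟶ Q) (g : Q ⟶ X),
        ISp I J ∧ PSp P Q ∧ IsShortExactSeq f g) ∧
      (∃ (J' Q' : WalkingSpan ⥤ 𝒜) (f : X ⟶ J') (g : J' ⟶ Q'),
        ISp I J' ∧ PSp P Q' ∧ IsShortExactSeq f g) :=
  span_cotorsion_pair_complete_general E P I hCP hcomplete hEext
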